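/- arXiv:0801.4358 — 2 statements merged into one kernel-verified Lean document; each statement's English description precedes it below -/
import Mathlib

section
/- Let (F̃, F) be a linear almost Poisson morphism between D* → Q and D̄* → Q̄, with F surjective and F̃ fiberwise injective (and F(q)=F(q') implies F̃_q(D*_q) = F̃_{q'}(D*_{q'})). If α ∈ Γ(Λ^k D*) is (F̃,F)-related to ᾱ ∈ Γ(Λ^k D̄*) (i.e., Λ^k F̃ ∘ α = ᾱ ∘ F), then d^D α is (F̃,F)-related to d^{D̄} ᾱ. In particular, for k = 0: d^{D̄}f̄ ∘ F = F̃ ∘ d^D(f̄∘F) for every f̄ ∈ C^∞(Q̄). -/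
/- STATEMENT 14.
Let (F̃, F) be a linear almost Poisson morphism between D* → Q and D̄* → Q̄
(expressed, equivalently, through the induced skew-symmetric algebroid data: the
pullback of sections preserves brackets and anchors), with F surjective and F̃
fiberwise injective (and F(q) = F(q') ⇒ F̃_q(D*_q) = F̃_{q'}(D*_{q'})).
If α ∈ Γ(Λ^k D*) is (F̃,F)-related to ᾱ ∈ Γ(Λ^k D̄*) — i.e. Λ^k F̃ ∘ α = ᾱ ∘ F,
expressed on pulled-back tuples of sections — then d^Dα is (F̃,F)-related to
d^{D̄}ᾱ.  In particular, for k = 0: d^{D̄}f̄ ∘ F = F̃ ∘ d^D(f̄∘F), i.e.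
(d^{D̄}f̄)(X̄)(F q) = (d^D(f̄∘F))((F̃,F)*X̄)(q) for every f̄ ∈ C^∞(Q̄). -/

section

/-- Raw `k`-forms on a bundle `D` over `Q`. -/
abbrev RawForm {Q : Type*} (D : Q → Type*) [∀ q, AddCommGroup (D q)] [∀ q, Module ℝ (D q)]
    (k : ℕ) :=
  (Fin k → (∀ q, D q)) → Q → ℝ

def IsForm {Q : Type*} {D : Q → Type*} [∀ q, AddCommGroup (D q)] [∀ q, Module ℝ (D q)]
    {k : ℕ} (ω : RawForm D k) : Prop :=
  (∀ (X : Fin k → ∀ q, D q) (i : Fin k) (Y Z : ∀ q, D q),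
      ω (Function.update X i (fun q => Y q + Z q)) =
        ω (Function.update X i Y) + ω (Function.update X i Z)) ∧
  (∀ (X : Fin k → ∀ q, D q) (i : Fin k) (f : Q → ℝ) (Y : ∀ q, D q),
      ω (Function.update X i (fun q => f q • Y q)) = f * ω (Function.update X i Y)) ∧
  (∀ (X : Fin k → ∀ q, D q) (i j : Fin k), i ≠ j → X i = X j → ω X = 0)

/-- The exterior-type differential of the skew-symmetric algebroid (br, ρ). -/
noncomputable def dForm {Q : Type*} {D : Q → Type*} [∀ q, AddCommGroup (D q)]
    [∀ q, Module ℝ (D q)]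
    (br : (∀ q, D q) → (∀ q, D q) → (∀ q, D q))
    (ρ : (∀ q, D q) → (Q → ℝ) → (Q → ℝ)) :
    ∀ {k : ℕ}, RawForm D k → RawForm D (k + 1)
  | 0, α => fun X => ρ (X 0) (α (fun i => i.elim0))
  | (m + 1), α => fun X =>
      (∑ i : Fin (m + 2), ((-1 : ℝ) ^ (i : ℕ)) • ρ (X i) (α (Fin.removeNth i X)))
        + ∑ i : Fin (m + 2), ∑ j : Fin (m + 2),
            if h : (i : ℕ) < (j : ℕ) then
              ((-1 : ℝ) ^ ((i : ℕ) + (j : ℕ))) •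
                α (Fin.cons (br (X i) (X j))
                    (Fin.removeNth ⟨(i : ℕ), by have := j.isLt; omega⟩
                      (Fin.removeNth j X)))
            else 0

/-! Every term of the differential is an anchor or a bracket of pulled-back sections, with the
form evaluated on a tuple of pulled-back sections. Since the pullback intertwines brackets and
anchors, and the forms are related on pulled-back tuples, the two differentials agree term by
term. -/

namespace RawForm

variable {Q Qb : Type*} {D : Q → Type*} {Db : Qb → Type*}
  [∀ q, AddCommGroup (D q)] [∀ q, Module ℝ (D q)]
  [∀ q, AddCommGroup (Db q)] [∀ q, Module ℝ (Db q)]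

def Related (F : Q → Qb) (pull : (∀ q, Db q) → (∀ q, D q)) {k : ℕ}
    (α : RawForm D k) (αb : RawForm Db k) : Prop :=
  ∀ (Xb : Fin k → ∀ q, Db q) (q : Q), α (fun i => pull (Xb i)) q = αb Xb (F q)

variable {F : Q → Qb} {pull : (∀ q, Db q) → (∀ q, D q)}

theorem Related.apply_removeNth {k : ℕ} {α : RawForm D k} {αb : RawForm Db k}
    (hrel : Related F pull α αb) (Xb : Fin (k + 1) → ∀ q, Db q) (i : Fin (k + 1)) :
    α (Fin.removeNth i fun l => pull (Xb l)) = αb (Fin.removeNth i Xb) ∘ F :=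
  funext (hrel (Fin.removeNth i Xb))

theorem Related.apply_cons {k : ℕ} {α : RawForm D (k + 1)} {αb : RawForm Db (k + 1)}
    (hrel : Related F pull α αb) (Z : ∀ q, Db q) (W : Fin k → ∀ q, Db q) (q : Q) :
    α (Fin.cons (pull Z) fun l => pull (W l)) q = αb (Fin.cons Z W) (F q) := by
  rw [← hrel (Fin.cons Z W) q]
  exact congrFun (congrArg α (Fin.comp_cons pull Z W).symm) q

theorem dForm_related {br : (∀ q, D q) → (∀ q, D q) → (∀ q, D q)}
    {ρ : (∀ q, D q) → (Q → ℝ) → (Q → ℝ)}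
    {brb : (∀ q, Db q) → (∀ q, Db q) → (∀ q, Db q)}
    {ρb : (∀ q, Db q) → (Qb → ℝ) → (Qb → ℝ)}
    (hbr : ∀ Xb Yb, br (pull Xb) (pull Yb) = pull (brb Xb Yb))
    (hρ : ∀ Xb (fb : Qb → ℝ), ρ (pull Xb) (fb ∘ F) = ρb Xb fb ∘ F)
    {k : ℕ} {α : RawForm D k} {αb : RawForm Db k} (hrel : Related F pull α αb) :
    Related F pull (dForm br ρ α) (dForm brb ρb αb) := by
  intro Xb q
  cases k with
  | zero =>
    have hα : α (fun i => i.elim0) = αb (fun i => i.elim0) ∘ F :=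
      funext fun q' => (congrArg (α · q') (Subsingleton.elim _ _)).trans (hrel _ q')
    simp only [dForm, hα, hρ, Function.comp_apply]
  | succ m =>
    simp only [dForm, Pi.add_apply, Finset.sum_apply, Pi.smul_apply, smul_eq_mul]
    congr 1
    · refine Finset.sum_congr rfl fun i _ => ?_
      rw [hrel.apply_removeNth, hρ]
      rfl
    · refine Finset.sum_congr rfl fun i _ => Finset.sum_congr rfl fun j _ => ?_
      split_ifs
      · rw [Pi.smul_apply, Pi.smul_apply, smul_eq_mul, smul_eq_mul, hbr]
        exact congrArg _ (hrel.apply_cons _ _ q)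
      · rfl

end RawForm

theorem stmt14_general {Q Qb : Type*} (D : Q → Type*) (Db : Qb → Type*)
    [∀ q, AddCommGroup (D q)] [∀ q, Module ℝ (D q)]
    [∀ q, AddCommGroup (Db q)] [∀ q, Module ℝ (Db q)]
    -- the induced skew-symmetric algebroid structures on D and D̄
    (brD : (∀ q, D q) → (∀ q, D q) → (∀ q, D q))
    (ρD : (∀ q, D q) → (Q → ℝ) → (Q → ℝ))
    (brDb : (∀ q, Db q) → (∀ q, Db q) → (∀ q, Db q))
    (ρDb : (∀ q, Db q) → (Qb → ℝ) → (Qb → ℝ))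
    -- the vector bundle morphism (F̃, F): F surjective, F̃ fiberwise injective,
    -- with fibers over the same point having the same image
    (F : Q → Qb)
    -- the pullback of sections, characterized by β((F̃,F)*X̄(q)) = F̃_q(β)(X̄(F q))
    (pull : (∀ q, Db q) → (∀ q, D q))
    -- (F̃, F) is a linear almost Poisson morphism: equivalently, the pullback of
    -- sections preserves the brackets and the anchors
    (hmorbr : ∀ Xb Yb : ∀ q, Db q, brD (pull Xb) (pull Yb) = pull (brDb Xb Yb))
    (hmoranc : ∀ (Xb : ∀ q, Db q) (fb : Qb → ℝ),
      ρD (pull Xb) (fb ∘ F) = (ρDb Xb fb) ∘ F) :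
    -- then (F̃,F)-relatedness of forms is preserved by the almost differentials:
    (∀ (k : ℕ) (α : RawForm D k) (αb : RawForm Db k), IsForm α → IsForm αb →
      (∀ (Xb : Fin k → ∀ q, Db q) (q : Q),
        α (fun i => pull (Xb i)) q = αb Xb (F q)) →
      (∀ (Xb : Fin (k + 1) → ∀ q, Db q) (q : Q),
        dForm brD ρD α (fun i => pull (Xb i)) q = dForm brDb ρDb αb Xb (F q))) ∧
    -- in particular for k = 0: d^{D̄}f̄ ∘ F = F̃ ∘ d^D(f̄∘F)
    (∀ (fb : Qb → ℝ) (Xb : ∀ q, Db q) (q : Q),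
      ρDb Xb fb (F q) = ρD (pull Xb) (fb ∘ F) q) := by
  exact ⟨fun _ _ _ _ _ hrel => RawForm.dForm_related hmorbr hmoranc hrel,
    fun fb Xb q => (congrFun (hmoranc Xb fb) q).symm⟩

theorem stmt14 {Q Qb : Type*} (D : Q → Type*) (Db : Qb → Type*)
    [∀ q, AddCommGroup (D q)] [∀ q, Module ℝ (D q)]
    [∀ q, AddCommGroup (Db q)] [∀ q, Module ℝ (Db q)]
    -- the induced skew-symmetric algebroid structures on D and D̄
    (brD : (∀ q, D q) → (∀ q, D q) → (∀ q, D q))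
    (ρD : (∀ q, D q) → (Q → ℝ) → (Q → ℝ))
    (brDb : (∀ q, Db q) → (∀ q, Db q) → (∀ q, Db q))
    (ρDb : (∀ q, Db q) → (Qb → ℝ) → (Qb → ℝ))
    -- the vector bundle morphism (F̃, F): F surjective, F̃ fiberwise injective,
    -- with fibers over the same point having the same image
    (F : Q → Qb) (hFsurj : Function.Surjective F)
    (Ft : ∀ q : Q, Module.Dual ℝ (D q) →ₗ[ℝ] Module.Dual ℝ (Db (F q)))
    (hFtinj : ∀ q : Q, Function.Injective (Ft q))
    (hFtrange : ∀ (q q' : Q) (h : F q = F q'),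
      Set.range (Ft q) =
        Set.range (fun γ : Module.Dual ℝ (D q') =>
          cast (congrArg (fun z => Module.Dual ℝ (Db z)) h.symm) (Ft q' γ)))
    -- the pullback of sections, characterized by β((F̃,F)*X̄(q)) = F̃_q(β)(X̄(F q))
    (pull : (∀ q, Db q) → (∀ q, D q))
    (hpull : ∀ (Xb : ∀ q, Db q) (q : Q) (β : Module.Dual ℝ (D q)),
      β (pull Xb q) = Ft q β (Xb (F q)))
    -- (F̃, F) is a linear almost Poisson morphism: equivalently, the pullback of
    -- sections preserves the brackets and the anchors
    (hmorbr : ∀ Xb Yb : ∀ q, Db q, brD (pull Xb) (pull Yb) = pull (brDb Xb Yb))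
    (hmoranc : ∀ (Xb : ∀ q, Db q) (fb : Qb → ℝ),
      ρD (pull Xb) (fb ∘ F) = (ρDb Xb fb) ∘ F) :
    -- then (F̃,F)-relatedness of forms is preserved by the almost differentials:
    (∀ (k : ℕ) (α : RawForm D k) (αb : RawForm Db k), IsForm α → IsForm αb →
      (∀ (Xb : Fin k → ∀ q, Db q) (q : Q),
        α (fun i => pull (Xb i)) q = αb Xb (F q)) →
      (∀ (Xb : Fin (k + 1) → ∀ q, Db q) (q : Q),
        dForm brD ρD α (fun i => pull (Xb i)) q = dForm brDb ρDb αb Xb (F q))) ∧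
    -- in particular for k = 0: d^{D̄}f̄ ∘ F = F̃ ∘ d^D(f̄∘F)
    (∀ (fb : Qb → ℝ) (Xb : ∀ q, Db q) (q : Q),
      ρDb Xb fb (F q) = ρD (pull Xb) (fb ∘ F) q) :=
  stmt14_general D Db brD ρD brDb ρDb F pull hmorbr hmoranc

end
end

section
/- With the nonholonomic bracket on D* induced from a Lie algebroid A, a metric G on A, and a subbundle D ⊆ A as above, the induced almost differential on D satisfies d^D α = Λ^k i_D*(d^A(P* ∘ α)) for every α ∈ Γ(Λ^k D*), where d^A is the Lie algebroid differential of A, P* : D* → A* the dual of the orthogonal projector, and i_D* : A* → D* the dual of the inclusion. -/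
/- Forms are maps from tuples of sections to functions on Q, so Λ^k i_D*(d^A(P* ∘ α)) evaluated
on X_0,…,X_k is (d^A(α ∘ P))(iX_0,…,iX_k). -/

section

/- In d^A(α ∘ π)(ιX) every argument of α has the form π(ι Y) = Y, except the bracket slot,
where π⟦ιX_i, ιX_j⟧ is by construction the induced bracket. -/
theorem dForm_induced_of_leftInverse {Q : Type*} {D A : Q → Type*}
    [∀ q, AddCommGroup (D q)] [∀ q, Module ℝ (D q)]
    [∀ q, AddCommGroup (A q)] [∀ q, Module ℝ (A q)]
    (brA : (∀ q, A q) → (∀ q, A q) → (∀ q, A q)) (ρA : (∀ q, A q) → (Q → ℝ) → (Q → ℝ))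
    {ι : (∀ q, D q) → (∀ q, A q)} {π : (∀ q, A q) → (∀ q, D q)}
    (hπι : Function.LeftInverse π ι) {k : ℕ} (α : RawForm D k) (X : Fin (k + 1) → ∀ q, D q) :
    dForm (fun X Y => π (brA (ι X) (ι Y))) (fun X => ρA (ι X)) α X =
      dForm brA ρA (fun Z => α (π ∘ Z)) (ι ∘ X) := by
  have hcomp : ∀ {n} (Y : Fin n → ∀ q, D q), π ∘ ι ∘ Y = Y := fun Y => funext fun j => hπι (Y j)
  cases k with
  | zero => exact congrArg (ρA (ι (X 0)) ∘ α) (Subsingleton.elim _ _)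
  | succ m =>
    simp only [dForm]
    congr 1
    · refine Finset.sum_congr rfl fun j _ => ?_
      change _ = _ • ρA _ (α (π ∘ ι ∘ Fin.removeNth j X))
      rw [hcomp]
      rfl
    · refine Finset.sum_congr rfl fun j _ => Finset.sum_congr rfl fun l _ => ?_
      split_ifs
      · change _ = _ • α (π ∘ Fin.cons _ (ι ∘ _))
        rw [Fin.comp_cons, hcomp]
        rfl
      · rfl

theorem stmt18_general {Q : Type*} (A : Q → Type*) (D : Q → Type*)
    [∀ q, AddCommGroup (A q)] [∀ q, Module ℝ (A q)]
    [∀ q, AddCommGroup (D q)] [∀ q, Module ℝ (D q)]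
    -- the Lie algebroid structure on A
    (brA : (∀ q, A q) → (∀ q, A q) → (∀ q, A q))
    (ρA : (∀ q, A q) → (Q → ℝ) → (Q → ℝ))
    -- the subbundle D (inclusion i) and the metric G with orthogonal projector P
    (i : ∀ q, D q →ₗ[ℝ] A q)
    (P : ∀ q, A q →ₗ[ℝ] D q)
    (hPi : ∀ q (d : D q), P q (i q d) = d) :
    -- d^D α = Λ^k i_D* (d^A (P* ∘ α)) for every k-form α on D:
    ∀ (k : ℕ) (α : RawForm D k), IsForm α →
      ∀ (X : Fin (k + 1) → ∀ q, D q) (q : Q),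
        dForm (fun X' Y' => fun q' =>
            P q' (brA (fun r => i r (X' r)) (fun r => i r (Y' r)) q'))
          (fun X' => ρA (fun r => i r (X' r))) α X q
          =
          dForm brA ρA
            (fun Z => α (fun j => fun q' => P q' (Z j q')))
            (fun j => fun q' => i q' (X j q')) q := fun _ α _ X q =>
  congrFun (dForm_induced_of_leftInverse brA ρA
    (ι := fun Y q => i q (Y q)) (π := fun Z q => P q (Z q))
    (fun Y => funext fun q => hPi q (Y q)) α X) q

theorem stmt18 {Q : Type*} (A : Q → Type*) (D : Q → Type*)
    [∀ q, AddCommGroup (A q)] [∀ q, Module ℝ (A q)]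
    [∀ q, AddCommGroup (D q)] [∀ q, Module ℝ (D q)]
    -- the Lie algebroid structure on A
    (brA : (∀ q, A q) → (∀ q, A q) → (∀ q, A q))
    (ρA : (∀ q, A q) → (Q → ℝ) → (Q → ℝ))
    (hskewA : ∀ X Y, brA X Y = - brA Y X)
    (hJacobiA : ∀ X Y Z, brA (brA X Y) Z + brA (brA Y Z) X + brA (brA Z X) Y = 0)
    (hρadd : ∀ X Y f, ρA (X + Y) f = ρA X f + ρA Y f)
    (hρfun : ∀ (g : Q → ℝ) X f, ρA (fun q => g q • X q) f = g * ρA X f)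
    (hρder : ∀ X f g, ρA X (f * g) = f * ρA X g + g * ρA X f)
    (hleibnizA : ∀ X Y (f : Q → ℝ),
      brA X (fun q => f q • Y q) = fun q => f q • brA X Y q + ρA X f q • Y q)
    -- the subbundle D (inclusion i) and the metric G with orthogonal projector P
    (i : ∀ q, D q →ₗ[ℝ] A q) (hiinj : ∀ q, Function.Injective (i q))
    (G : ∀ q, A q →ₗ[ℝ] A q →ₗ[ℝ] ℝ)
    (hGsymm : ∀ q a b, G q a b = G q b a)
    (hGpos : ∀ q a, a ≠ 0 → 0 < G q a a)
    (P : ∀ q, A q →ₗ[ℝ] D q)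
    (hPi : ∀ q (d : D q), P q (i q d) = d)
    (hPorth : ∀ q (a : A q) (d : D q), G q (a - i q (P q a)) (i q d) = 0) :
    -- d^D α = Λ^k i_D* (d^A (P* ∘ α)) for every k-form α on D:
    ∀ (k : ℕ) (α : RawForm D k), IsForm α →
      ∀ (X : Fin (k + 1) → ∀ q, D q) (q : Q),
        dForm (fun X' Y' => fun q' =>
            P q' (brA (fun r => i r (X' r)) (fun r => i r (Y' r)) q'))
          (fun X' => ρA (fun r => i r (X' r))) α X q
          =
          dForm brA ρA
            (fun Z => α (fun j => fun q' => P q' (Z j q')))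
            (fun j => fun q' => i q' (X j q')) q :=
  stmt18_general A D brA ρA i P hPi

end
end
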